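/- arXiv:2601.22471 — 2 statements merged into one kernel-verified Lean document; each statement's English description precedes it below -/
import Mathlib

section
/- Let Φ₀, Φ₁ : B(H) → B(K) be quantum channels, {P₀,P₁} a POVM, σ a density operator, p_j = Tr(P_jσ). Then for every density operator ρ, the coherent information of the projective direct sum channel satisfies I_c(Φ₀ ⊕_{P₀,P₁} Φ₁, ρ) = p₀·I_c(Φ₀, ρ) + p₁·I_c(Φ₁, ρ), where I_c(Φ,ρ) = S(Φ(ρ)) − S(Φᶜ(ρ)) and the complementary channel of the projective direct sum is taken to be the projective direct sum of the complementary channels. -/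
open scoped Matrix ComplexOrder BigOperators

open Classical in
/-- Von Neumann entropy (base 2) via eigenvalues; `Real.logb 2 0 = 0` gives `0·log 0 = 0`. -/
noncomputable def vnEntropy {K : Type*} [Fintype K] [DecidableEq K]
    (A : Matrix K K ℂ) : ℝ :=
  if h : A.IsHermitian then -∑ i, h.eigenvalues i * Real.logb 2 (h.eigenvalues i) else 0

/-- Partial trace over the second (environment) tensor factor. -/
noncomputable def ptrE {k e : ℕ} (M : Matrix (Fin k × Fin e) (Fin k × Fin e) ℂ) :
    Matrix (Fin k) (Fin k) ℂ :=
  Matrix.of fun i j => ∑ x, M (i, x) (j, x)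

/-- Partial trace over the first (output) tensor factor. -/
noncomputable def ptrB {k e : ℕ} (M : Matrix (Fin k × Fin e) (Fin k × Fin e) ℂ) :
    Matrix (Fin e) (Fin e) ℂ :=
  Matrix.of fun i j => ∑ x, M (x, i) (x, j)

/-- The projective direct sum `ρ ↦ p₀Φ₀(ρ)⊗|0⟩⟨0| + p₁Φ₁(ρ)⊗|1⟩⟨1|`. -/
noncomputable def pds {n : ℕ} {K : Type*} [Fintype K] [DecidableEq K] (p₀ p₁ : ℝ)
    (Φ₀ Φ₁ : Matrix (Fin n) (Fin n) ℂ → Matrix K K ℂ)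
    (ρ : Matrix (Fin n) (Fin n) ℂ) : Matrix (K × Fin 2) (K × Fin 2) ℂ :=
  Matrix.of fun a b =>
    if a.2 = b.2 then
      (if a.2 = 0 then (p₀ : ℂ) * Φ₀ ρ a.1 b.1 else (p₁ : ℂ) * Φ₁ ρ a.1 b.1)
    else 0

section Aux


open Matrix Polynomial

set_option linter.unusedSectionVars false

variable {m : Type*} [Fintype m] [DecidableEq m]

lemma charpoly_diagonal' (c : m → ℂ) :
    (Matrix.diagonal c).charpoly = ∏ i, (X - C (c i)) := by
  have h : charmatrix (Matrix.diagonal c) = Matrix.diagonal fun i => (X : ℂ[X]) - C (c i) := by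
    ext i j
    by_cases hij : i = j
    · subst hij; simp
    · simp [Matrix.diagonal_apply_ne _ hij, charmatrix_apply_ne _ _ _ hij]
  rw [Matrix.charpoly, h, Matrix.det_diagonal]

lemma charpoly_conj' (U D : Matrix m m ℂ) (h1 : U * Uᴴ = 1) :
    (U * D * Uᴴ).charpoly = D.charpoly := by
  have hsc : ∀ A : Matrix m m ℂ[X], A * Matrix.scalar m (X : ℂ[X]) = Matrix.scalar m X * A :=
    fun A => (Matrix.scalar_commute (X : ℂ[X]) (Commute.all _) A).symm
  have h1' : U.map Polynomial.C * Uᴴ.map Polynomial.C = 1 := by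
    rw [← Matrix.map_mul, h1, Matrix.map_one _ (map_zero C) (map_one C)]
  have key : charmatrix (U * D * Uᴴ) =
      U.map Polynomial.C * charmatrix D * Uᴴ.map Polynomial.C := by
    simp only [charmatrix, RingHom.mapMatrix_apply, mul_sub, sub_mul]
    congr 1
    · rw [mul_assoc, ← hsc, ← mul_assoc, h1', one_mul]
    · rw [← Matrix.map_mul, ← Matrix.map_mul]
  have hdet : (U.map Polynomial.C).det * (Uᴴ.map Polynomial.C).det = 1 := by
    rw [← Matrix.det_mul, h1', Matrix.det_one]
  rw [Matrix.charpoly, Matrix.charpoly, key, Matrix.det_mul, Matrix.det_mul]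
  rw [mul_comm, ← mul_assoc, mul_comm ((Uᴴ.map Polynomial.C).det), hdet, one_mul]

lemma roots_prod' (f : m → ℂ) :
    (∏ i, (X - C (f i))).roots = Multiset.map f Finset.univ.val := by
  have : (∏ i, (X - C (f i))) = ((Finset.univ.val.map f).map (fun a => X - C a)).prod := by
    rw [Multiset.map_map, Finset.prod_eq_multiset_prod]; rfl
  rw [this, Polynomial.roots_multiset_prod_X_sub_C]

lemma multiset_eig {M U : Matrix m m ℂ} {d : m → ℝ} (hU : U * Uᴴ = 1)
    (hM : M = U * Matrix.diagonal (fun i => (d i : ℂ)) * Uᴴ) (hH : M.IsHermitian) :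
    Multiset.map hH.eigenvalues Finset.univ.val = Multiset.map d Finset.univ.val := by
  have hV : (hH.eigenvectorUnitary : Matrix m m ℂ) * (hH.eigenvectorUnitary : Matrix m m ℂ)ᴴ
      = 1 := by
    rw [← Matrix.star_eq_conjTranspose]
    exact Unitary.mul_star_self_of_mem hH.eigenvectorUnitary.prop
  have h1 : M.charpoly = ∏ i, (X - C ((d i : ℂ))) := by
    rw [hM, charpoly_conj' _ _ hU, charpoly_diagonal']
  have h2 : M.charpoly = ∏ i, (X - C ((hH.eigenvalues i : ℂ))) := by
    conv_lhs => rw [hH.spectral_theorem]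
    rw [Unitary.conjStarAlgAut_apply, Matrix.star_eq_conjTranspose, charpoly_conj' _ _ hV]
    exact charpoly_diagonal' _
  have h3 := congrArg Polynomial.roots (h2.symm.trans h1)
  rw [roots_prod', roots_prod'] at h3
  apply Multiset.map_injective Complex.ofReal_injective
  rw [Multiset.map_map, Multiset.map_map]
  exact h3

lemma sum_f_eig {M U : Matrix m m ℂ} {d : m → ℝ} (hU : U * Uᴴ = 1)
    (hM : M = U * Matrix.diagonal (fun i => (d i : ℂ)) * Uᴴ) (hH : M.IsHermitian)
    (f : ℝ → ℝ) : ∑ i, f (hH.eigenvalues i) = ∑ i, f (d i) := by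
  have h := congrArg (fun s => (Multiset.map f s).sum) (multiset_eig hU hM hH)
  simpa only [Multiset.map_map, Function.comp, Finset.sum] using h

lemma sum_eig_eq_trace {M : Matrix m m ℂ} (hH : M.IsHermitian) :
    ((∑ i, hH.eigenvalues i : ℝ) : ℂ) = M.trace := by
  conv_rhs => rw [hH.spectral_theorem]
  rw [Unitary.conjStarAlgAut_apply, Matrix.trace_mul_cycle, Unitary.star_mul_self_of_mem hH.eigenvectorUnitary.prop,
    one_mul, Matrix.trace_diagonal]
  push_cast
  rfl

lemma isHermitian_diag_conj (U : Matrix m m ℂ) (d : m → ℝ) :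
    (U * Matrix.diagonal (fun i => (d i : ℂ)) * Uᴴ).IsHermitian := by
  have hd : (Matrix.diagonal (fun i => (d i : ℂ))).IsHermitian := by
    have : (star fun i => ((d i : ℝ) : ℂ)) = fun i => ((d i : ℝ) : ℂ) := by
      funext i
      exact Complex.conj_ofReal _
    rw [Matrix.IsHermitian, Matrix.diagonal_conjTranspose, this]
  exact Matrix.isHermitian_mul_mul_conjTranspose U hd

lemma vnEntropy_diag_conj {M U : Matrix m m ℂ} (d : m → ℝ) (hU : U * Uᴴ = 1)
    (hM : M = U * Matrix.diagonal (fun i => (d i : ℂ)) * Uᴴ) :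
    vnEntropy M = -∑ i, d i * Real.logb 2 (d i) := by
  have hH : M.IsHermitian := hM ▸ isHermitian_diag_conj U d
  rw [vnEntropy, dif_pos hH, sum_f_eig hU hM hH (fun x => x * Real.logb 2 x)]

/-- The "flagged direct sum" block matrix. -/
noncomputable def pdsM (A B : Matrix m m ℂ) : Matrix (m × Fin 2) (m × Fin 2) ℂ :=
  Matrix.of fun a b => if a.2 = b.2 then (if a.2 = 0 then A a.1 b.1 else B a.1 b.1) else 0

lemma pdsM_mul (A B C D : Matrix m m ℂ) :
    pdsM A B * pdsM C D = pdsM (A * C) (B * D) := by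
  ext ⟨a1, a2⟩ ⟨b1, b2⟩
  simp only [pdsM, Matrix.mul_apply, Matrix.of_apply, Fintype.sum_prod_type_right,
    Fin.sum_univ_two]
  fin_cases a2 <;> fin_cases b2 <;> simp [Matrix.mul_apply]

lemma pdsM_conjTranspose (A B : Matrix m m ℂ) : (pdsM A B)ᴴ = pdsM Aᴴ Bᴴ := by
  ext ⟨a1, a2⟩ ⟨b1, b2⟩
  simp only [pdsM, Matrix.conjTranspose_apply, Matrix.of_apply]
  fin_cases a2 <;> fin_cases b2 <;> simp

lemma pdsM_one : pdsM (1 : Matrix m m ℂ) 1 = 1 := by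
  ext ⟨a1, a2⟩ ⟨b1, b2⟩
  simp only [pdsM, Matrix.of_apply, Matrix.one_apply, Prod.mk.injEq]
  fin_cases a2 <;> fin_cases b2 <;> simp [Matrix.one_apply]

lemma pdsM_diagonal (c₀ c₁ : m → ℂ) :
    pdsM (Matrix.diagonal c₀) (Matrix.diagonal c₁) =
      Matrix.diagonal (fun x : m × Fin 2 => if x.2 = 0 then c₀ x.1 else c₁ x.1) := by
  ext ⟨a1, a2⟩ ⟨b1, b2⟩
  simp only [pdsM, Matrix.of_apply, Matrix.diagonal_apply, Prod.mk.injEq]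
  fin_cases a2 <;> fin_cases b2 <;> by_cases h : a1 = b1 <;> simp [h]

lemma mul_logb_split {p x : ℝ} (hp : 0 ≤ p) (hx : 0 ≤ x) :
    (p * x) * Real.logb 2 (p * x)
      = p * (x * Real.logb 2 x) + x * (p * Real.logb 2 p) := by
  rcases eq_or_lt_of_le hp with h | hp'
  · simp [← h]
  rcases eq_or_lt_of_le hx with h | hx'
  · simp [← h]
  rw [Real.logb_mul hp'.ne' hx'.ne']
  ring

lemma vnEntropy_pdsM {p₀ p₁ : ℝ} (hp₀ : 0 ≤ p₀) (hp₁ : 0 ≤ p₁)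
    {A B : Matrix m m ℂ} (hA : A.PosSemidef) (hB : B.PosSemidef)
    (hAt : A.trace = 1) (hBt : B.trace = 1) :
    vnEntropy (pdsM ((p₀ : ℂ) • A) ((p₁ : ℂ) • B)) =
      p₀ * vnEntropy A + p₁ * vnEntropy B
        - p₀ * Real.logb 2 p₀ - p₁ * Real.logb 2 p₁ := by
  have h₀ : A.IsHermitian := hA.1
  have h₁ : B.IsHermitian := hB.1
  set U₀ : Matrix m m ℂ := (h₀.eigenvectorUnitary : Matrix m m ℂ) with hU₀def
  set U₁ : Matrix m m ℂ := (h₁.eigenvectorUnitary : Matrix m m ℂ) with hU₁def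
  have hU₀ : U₀ * U₀ᴴ = 1 := by
    rw [← Matrix.star_eq_conjTranspose]
    exact Unitary.mul_star_self_of_mem h₀.eigenvectorUnitary.prop
  have hU₁ : U₁ * U₁ᴴ = 1 := by
    rw [← Matrix.star_eq_conjTranspose]
    exact Unitary.mul_star_self_of_mem h₁.eigenvectorUnitary.prop
  set d : m × Fin 2 → ℝ :=
    fun x => if x.2 = 0 then p₀ * h₀.eigenvalues x.1 else p₁ * h₁.eigenvalues x.1 with hd
  have hU : pdsM U₀ U₁ * (pdsM U₀ U₁)ᴴ = 1 := by
    rw [pdsM_conjTranspose, pdsM_mul, hU₀, hU₁, pdsM_one]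
  have hdec : pdsM ((p₀ : ℂ) • A) ((p₁ : ℂ) • B)
      = pdsM U₀ U₁ * Matrix.diagonal (fun x => (d x : ℂ)) * (pdsM U₀ U₁)ᴴ := by
    have hdiag : Matrix.diagonal (fun x : m × Fin 2 => (d x : ℂ))
        = pdsM (Matrix.diagonal fun i => ((p₀ * h₀.eigenvalues i : ℝ) : ℂ))
               (Matrix.diagonal fun i => ((p₁ * h₁.eigenvalues i : ℝ) : ℂ)) := by
      rw [pdsM_diagonal]
      refine congrArg Matrix.diagonal (funext fun x => ?_)
      by_cases h : x.2 = 0 <;> simp [hd, h]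
    have hsp : ∀ (p : ℝ) (C : Matrix m m ℂ) (h : C.IsHermitian),
        ((h.eigenvectorUnitary : Matrix m m ℂ)) *
          (Matrix.diagonal fun i => ((p * h.eigenvalues i : ℝ) : ℂ)) *
          ((h.eigenvectorUnitary : Matrix m m ℂ))ᴴ = (p : ℂ) • C := by
      intro p C h
      have hdg : (Matrix.diagonal fun i => ((p * h.eigenvalues i : ℝ) : ℂ))
          = (p : ℂ) • Matrix.diagonal ((fun r : ℝ => (r : ℂ)) ∘ h.eigenvalues) := by
        rw [← Matrix.diagonal_smul]
        refine congrArg Matrix.diagonal (funext fun i => ?_)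
        push_cast
        rfl
      rw [hdg, Matrix.mul_smul, Matrix.smul_mul]
      congr 1
      conv_rhs => rw [h.spectral_theorem]
      rw [Unitary.conjStarAlgAut_apply, Matrix.star_eq_conjTranspose]
      rfl
    rw [hdiag, pdsM_conjTranspose, pdsM_mul, pdsM_mul, hsp p₀ A h₀, hsp p₁ B h₁]
  rw [vnEntropy_diag_conj d hU hdec]
  have hsA : ∑ i, h₀.eigenvalues i = 1 := by
    have h := sum_eig_eq_trace h₀
    rw [hAt] at h
    exact_mod_cast h
  have hsB : ∑ i, h₁.eigenvalues i = 1 := by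
    have h := sum_eig_eq_trace h₁
    rw [hBt] at h
    exact_mod_cast h
  have hvA : vnEntropy A = -∑ i, h₀.eigenvalues i * Real.logb 2 (h₀.eigenvalues i) := by
    rw [vnEntropy, dif_pos h₀]
  have hvB : vnEntropy B = -∑ i, h₁.eigenvalues i * Real.logb 2 (h₁.eigenvalues i) := by
    rw [vnEntropy, dif_pos h₁]
  have hsum : ∑ x : m × Fin 2, d x * Real.logb 2 (d x)
      = ∑ i, ((p₀ * (h₀.eigenvalues i * Real.logb 2 (h₀.eigenvalues i))
              + h₀.eigenvalues i * (p₀ * Real.logb 2 p₀))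
            + (p₁ * (h₁.eigenvalues i * Real.logb 2 (h₁.eigenvalues i))
              + h₁.eigenvalues i * (p₁ * Real.logb 2 p₁))) := by
    rw [Fintype.sum_prod_type]
    refine Finset.sum_congr rfl fun i _ => ?_
    rw [Fin.sum_univ_two]
    have h0 : d (i, 0) = p₀ * h₀.eigenvalues i := by simp [hd]
    have h1 : d (i, 1) = p₁ * h₁.eigenvalues i := by simp [hd]
    rw [h0, h1, mul_logb_split hp₀ (hA.eigenvalues_nonneg i),
      mul_logb_split hp₁ (hB.eigenvalues_nonneg i)]
  rw [hsum, Finset.sum_add_distrib, Finset.sum_add_distrib, Finset.sum_add_distrib,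
    ← Finset.mul_sum, ← Finset.mul_sum, ← Finset.sum_mul, ← Finset.sum_mul,
    hsA, hsB, hvA, hvB]
  ring

lemma ptrE_posSemidef {k e : ℕ} {M : Matrix (Fin k × Fin e) (Fin k × Fin e) ℂ}
    (hM : M.PosSemidef) : (ptrE M).PosSemidef := by
  open scoped MatrixOrder Matrix.Norms.L2Operator in obtain ⟨B, hB⟩ := CStarAlgebra.nonneg_iff_eq_star_mul_self.mp hM.nonneg
  have : ptrE M = (Matrix.of fun (p : (Fin k × Fin e) × Fin e) (i : Fin k) => B p.1 (i, p.2))ᴴ *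
      (Matrix.of fun (p : (Fin k × Fin e) × Fin e) (i : Fin k) => B p.1 (i, p.2)) := by
    ext i j
    simp only [ptrE, Matrix.of_apply, Matrix.mul_apply, Matrix.conjTranspose_apply, hB,
      Fintype.sum_prod_type]
    rw [Finset.sum_comm]
    exact Finset.sum_congr rfl fun a _ => Finset.sum_comm
  rw [this]
  exact Matrix.posSemidef_conjTranspose_mul_self _

lemma ptrB_posSemidef {k e : ℕ} {M : Matrix (Fin k × Fin e) (Fin k × Fin e) ℂ}
    (hM : M.PosSemidef) : (ptrB M).PosSemidef := by
  open scoped MatrixOrder Matrix.Norms.L2Operator in obtain ⟨B, hB⟩ := CStarAlgebra.nonneg_iff_eq_star_mul_self.mp hM.nonneg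
  have : ptrB M = (Matrix.of fun (p : (Fin k × Fin e) × Fin k) (i : Fin e) => B p.1 (p.2, i))ᴴ *
      (Matrix.of fun (p : (Fin k × Fin e) × Fin k) (i : Fin e) => B p.1 (p.2, i)) := by
    ext i j
    simp only [ptrB, Matrix.of_apply, Matrix.mul_apply, Matrix.conjTranspose_apply, hB,
      Fintype.sum_prod_type]
    rw [Finset.sum_comm]
    exact Finset.sum_congr rfl fun a _ => Finset.sum_comm
  rw [this]
  exact Matrix.posSemidef_conjTranspose_mul_self _

lemma ptrE_trace {k e : ℕ} (M : Matrix (Fin k × Fin e) (Fin k × Fin e) ℂ) :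
    (ptrE M).trace = M.trace := by
  simp [Matrix.trace, ptrE, Matrix.diag, Fintype.sum_prod_type]

lemma ptrB_trace {k e : ℕ} (M : Matrix (Fin k × Fin e) (Fin k × Fin e) ℂ) :
    (ptrB M).trace = M.trace := by
  rw [Matrix.trace, Matrix.trace]
  rw [Fintype.sum_prod_type]
  rw [Finset.sum_comm]
  simp [ptrB, Matrix.diag]

lemma trace_re_nonneg' {m : Type*} [Fintype m] [DecidableEq m] {M : Matrix m m ℂ}
    (hM : M.PosSemidef) : 0 ≤ M.trace.re := by
  have h : (0 : ℂ) ≤ M.trace := by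
    refine Finset.sum_nonneg fun i _ => ?_
    have := hM.dotProduct_mulVec_nonneg (Pi.single i 1)
    simpa [dotProduct, Matrix.mulVec, Pi.single_apply, Finset.mul_sum] using this
  exact (Complex.le_def.mp h).1

lemma pds_eq {n : ℕ} {K : Type*} [Fintype K] [DecidableEq K] (p₀ p₁ : ℝ)
    (Φ₀ Φ₁ : Matrix (Fin n) (Fin n) ℂ → Matrix K K ℂ) (ρ : Matrix (Fin n) (Fin n) ℂ) :
    pds p₀ p₁ Φ₀ Φ₁ ρ = pdsM ((p₀ : ℂ) • Φ₀ ρ) ((p₁ : ℂ) • Φ₁ ρ) := rfl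

end Aux

/-- Coherent information of the projective direct sum: for channels `Φ₀, Φ₁` given by
Stinespring isometries `V₀, V₁` (with complementary channels `Φ₀ᶜ, Φ₁ᶜ`, and the
complementary channel of the projective direct sum taken to be the projective direct sum
of the complementary channels), a POVM `{P₀,P₁}` and density `σ` with `p_j = Tr(P_jσ)`,
one has `I_c(Φ₀ ⊕_{P₀,P₁} Φ₁, ρ) = p₀·I_c(Φ₀,ρ) + p₁·I_c(Φ₁,ρ)` for every density `ρ`. -/
theorem coherentInfo_pds {n k e : ℕ}
    (V₀ V₁ : Matrix (Fin k × Fin e) (Fin n) ℂ)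
    (hV₀ : V₀ᴴ * V₀ = 1) (hV₁ : V₁ᴴ * V₁ = 1)
    (Φ₀ Φ₁ : Matrix (Fin n) (Fin n) ℂ → Matrix (Fin k) (Fin k) ℂ)
    (Φ₀c Φ₁c : Matrix (Fin n) (Fin n) ℂ → Matrix (Fin e) (Fin e) ℂ)
    (hΦ₀ : ∀ ρ, Φ₀ ρ = ptrE (V₀ * ρ * V₀ᴴ)) (hΦ₁ : ∀ ρ, Φ₁ ρ = ptrE (V₁ * ρ * V₁ᴴ))
    (hΦ₀c : ∀ ρ, Φ₀c ρ = ptrB (V₀ * ρ * V₀ᴴ)) (hΦ₁c : ∀ ρ, Φ₁c ρ = ptrB (V₁ * ρ * V₁ᴴ))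
    (P₀ P₁ : Matrix (Fin n) (Fin n) ℂ) (hP₀ : P₀.PosSemidef) (hP₁ : P₁.PosSemidef)
    (hPOVM : P₀ + P₁ = 1)
    (σ : Matrix (Fin n) (Fin n) ℂ) (hσ : σ.PosSemidef) (hσtr : σ.trace = 1)
    (p₀ p₁ : ℝ) (hp₀ : p₀ = ((P₀ * σ).trace).re) (hp₁ : p₁ = ((P₁ * σ).trace).re) :
    ∀ ρ : Matrix (Fin n) (Fin n) ℂ, ρ.PosSemidef → ρ.trace = 1 →
      vnEntropy (pds p₀ p₁ Φ₀ Φ₁ ρ) - vnEntropy (pds p₀ p₁ Φ₀c Φ₁c ρ) =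
        p₀ * (vnEntropy (Φ₀ ρ) - vnEntropy (Φ₀c ρ)) +
        p₁ * (vnEntropy (Φ₁ ρ) - vnEntropy (Φ₁c ρ)) := by
  intro ρ hρ hρt
  have hnn : ∀ P : Matrix (Fin n) (Fin n) ℂ, P.PosSemidef → 0 ≤ ((P * σ).trace).re := by
    intro P hP
    open scoped MatrixOrder Matrix.Norms.L2Operator in obtain ⟨B, hB⟩ := CStarAlgebra.nonneg_iff_eq_star_mul_self.mp hP.nonneg
    have hps : (B * σ * Bᴴ).PosSemidef := hσ.mul_mul_conjTranspose_same B
    have htr : (P * σ).trace = (B * σ * Bᴴ).trace := by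
      rw [hB]
      exact (Matrix.trace_mul_cycle B σ Bᴴ).symm
    rw [htr]
    exact trace_re_nonneg' hps
  have hp₀' : 0 ≤ p₀ := hp₀ ▸ hnn P₀ hP₀
  have hp₁' : 0 ≤ p₁ := hp₁ ▸ hnn P₁ hP₁
  have hM₀ : (V₀ * ρ * V₀ᴴ).PosSemidef := hρ.mul_mul_conjTranspose_same V₀
  have hM₁ : (V₁ * ρ * V₁ᴴ).PosSemidef := hρ.mul_mul_conjTranspose_same V₁
  have htr₀ : (V₀ * ρ * V₀ᴴ).trace = 1 := by
    rw [Matrix.trace_mul_cycle V₀ ρ V₀ᴴ, hV₀, one_mul, hρt]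
  have htr₁ : (V₁ * ρ * V₁ᴴ).trace = 1 := by
    rw [Matrix.trace_mul_cycle V₁ ρ V₁ᴴ, hV₁, one_mul, hρt]
  have hA₀ : (Φ₀ ρ).PosSemidef := by rw [hΦ₀]; exact ptrE_posSemidef hM₀
  have hA₁ : (Φ₁ ρ).PosSemidef := by rw [hΦ₁]; exact ptrE_posSemidef hM₁
  have hA₀c : (Φ₀c ρ).PosSemidef := by rw [hΦ₀c]; exact ptrB_posSemidef hM₀
  have hA₁c : (Φ₁c ρ).PosSemidef := by rw [hΦ₁c]; exact ptrB_posSemidef hM₁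
  have tr₀ : (Φ₀ ρ).trace = 1 := by rw [hΦ₀, ptrE_trace, htr₀]
  have tr₁ : (Φ₁ ρ).trace = 1 := by rw [hΦ₁, ptrE_trace, htr₁]
  have tr₀c : (Φ₀c ρ).trace = 1 := by rw [hΦ₀c, ptrB_trace, htr₀]
  have tr₁c : (Φ₁c ρ).trace = 1 := by rw [hΦ₁c, ptrB_trace, htr₁]
  rw [pds_eq, pds_eq, vnEntropy_pdsM hp₀' hp₁' hA₀ hA₁ tr₀ tr₁,
    vnEntropy_pdsM hp₀' hp₁' hA₀c hA₁c tr₀c tr₁c]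
  ring
end

section
/- Let G = (V,E) be a finite simple graph, |ψ̃_v⟩ the associated unit vectors (orthogonal for non-adjacent distinct pairs), and Φ_G the c-q channel |v⟩⟨v| ↦ |ψ̃_v⟩⟨ψ̃_v|. Suppose {P^i_v : v ∈ V} ⊆ B(H), i ∈ [t], are PVMs on a finite-dimensional Hilbert space H such that P^i_v P^j_w = 0 for i ≠ j whenever v = w or (v,w) ∈ E. Let |τ⟩ ∈ H ⊗ H be the maximally entangled state, E_i the q-c channel ρ ↦ ∑_v Tr(P^i_v ρ)|v⟩⟨v|, and ρ_i = (Φ_G ⊗ id)∘(E_i ⊗ id)(|τ⟩⟨τ|). Then Tr(ρ_i ρ_j) = 0 for all i ≠ j, i.e., the states ρ_1,…,ρ_t are perfectly distinguishable. -/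
open scoped Matrix ComplexOrder BigOperators
open scoped Kronecker

/-- Ampliation `Φ ⊗ id` of a map on the first tensor factor. -/
noncomputable def tensorId {A B C : Type*} [Fintype A] [Fintype B] [Fintype C]
    (Φ : Matrix A A ℂ → Matrix B B ℂ)
    (M : Matrix (A × C) (A × C) ℂ) : Matrix (B × C) (B × C) ℂ :=
  Matrix.of fun p q => Φ (Matrix.of fun x y => M (x, p.2) (y, q.2)) p.1 q.1

/-- The density matrix of the canonical maximally entangled state
`|τ⟩ = d^{-1/2} ∑_k |k⟩|k⟩` on `H ⊗ H`. -/
noncomputable def maxEntangled (d : ℕ) : Matrix (Fin d × Fin d) (Fin d × Fin d) ℂ :=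
  Matrix.of fun p q =>
    ((d : ℂ))⁻¹ * (if p.1 = p.2 then 1 else 0) * (if q.1 = q.2 then 1 else 0)

/-- If `{P^i_v}` are PVMs with `P^i_v P^j_w = 0` (for `i ≠ j`) whenever `v = w` or
`v ∼ w`, and the unit vectors `ψ̃_v` are orthogonal for distinct non-adjacent pairs,
then the states `ρ_i = (Φ_G ⊗ id)∘(E_i ⊗ id)(|τ⟩⟨τ|)` — with `Φ_G` the c-q channel
`|v⟩⟨v| ↦ |ψ̃_v⟩⟨ψ̃_v|`, `E_i` the q-c channel of `{P^i_v}`, and `|τ⟩` maximally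
entangled — satisfy `Tr(ρ_i ρ_j) = 0` for `i ≠ j`, i.e. are perfectly distinguishable. -/
theorem pds_states_distinguishable {V : Type*} [Fintype V] [DecidableEq V]
    (G : SimpleGraph V) [DecidableRel G.Adj] (t : ℕ)
    (ψt : V → V → ℂ)
    (hunit : ∀ v, ∑ x, star (ψt v x) * ψt v x = 1)
    (horthvec : ∀ v w, v ≠ w → ¬G.Adj v w → ∑ x, star (ψt v x) * ψt w x = 0)
    (d : ℕ) (hd : 0 < d)
    (P : Fin t → V → Matrix (Fin d) (Fin d) ℂ)
    (hproj : ∀ i v, (P i v).IsHermitian ∧ P i v * P i v = P i v)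
    (hsum : ∀ i, ∑ v, P i v = 1)
    (horth : ∀ i j, i ≠ j → ∀ v w, (v = w ∨ G.Adj v w) → P i v * P j w = 0)
    (ΦG : Matrix V V ℂ → Matrix V V ℂ)
    (hΦG : ∀ M, ΦG M = ∑ v, M v v • Matrix.of fun x y => ψt v x * star (ψt v y))
    (Emeas : Fin t → Matrix (Fin d) (Fin d) ℂ → Matrix V V ℂ)
    (hE : ∀ i M, Emeas i M = Matrix.of fun v w => if v = w then (P i v * M).trace else 0)
    (ρs : Fin t → Matrix (V × Fin d) (V × Fin d) ℂ)
    (hρ : ∀ i, ρs i = tensorId (fun M => ΦG (Emeas i M)) (maxEntangled d)) :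
    ∀ i j, i ≠ j → (ρs i * ρs j).trace = 0 := by
  intro i j hij
  set Ψ : V → Matrix V V ℂ := fun v => Matrix.of fun x y => ψt v x * star (ψt v y) with hΨ
  have hρ' : ∀ k, ρs k = ∑ v, (d:ℂ)⁻¹ • (Ψ v ⊗ₖ (P k v)ᵀ) := by
    intro k
    rw [hρ k]
    ext ⟨v₁, a⟩ ⟨v₂, b⟩
    simp only [tensorId, maxEntangled, hΦG, hE, hΨ, Matrix.of_apply, Matrix.trace,
      Matrix.diag_apply, Matrix.mul_apply, Matrix.sum_apply, Matrix.smul_apply,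
      smul_eq_mul, Matrix.kroneckerMap_apply, Matrix.transpose_apply,
      mul_ite, ite_mul, mul_one, mul_zero, one_mul, zero_mul,
      Finset.sum_ite_eq, Finset.sum_ite_eq', Finset.mem_univ, if_true, Finset.sum_ite_irrel, Finset.sum_const_zero]
    exact Finset.sum_congr rfl fun x _ => by ring
  rw [hρ' i, hρ' j, Finset.sum_mul_sum, Matrix.trace_sum]
  refine Finset.sum_eq_zero fun v _ => ?_
  rw [Matrix.trace_sum]
  refine Finset.sum_eq_zero fun w _ => ?_
  rw [Matrix.smul_mul, Matrix.mul_smul, Matrix.trace_smul, Matrix.trace_smul,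
    ← Matrix.mul_kronecker_mul, Matrix.trace_kronecker]
  by_cases h : v = w ∨ G.Adj v w
  · have h0 : (P i v)ᵀ * (P j w)ᵀ = 0 := by
      rw [← Matrix.transpose_mul, horth j i (Ne.symm hij) w v
        (h.imp Eq.symm G.adj_symm), Matrix.transpose_zero]
    rw [h0, Matrix.trace_zero, mul_zero, smul_zero, smul_zero]
  · push_neg at h
    have h0 : (Ψ v * Ψ w).trace = 0 := by
      have hin : ∑ x, star (ψt v x) * ψt w x = 0 := horthvec v w h.1 h.2
      simp only [hΨ, Matrix.trace, Matrix.diag_apply, Matrix.mul_apply, Matrix.of_apply]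
      calc ∑ x, ∑ k, ψt v x * star (ψt v k) * (ψt w k * star (ψt w x))
          = (∑ k, star (ψt v k) * ψt w k) * ∑ x, ψt v x * star (ψt w x) := by
            rw [Finset.sum_mul_sum]
            exact Finset.sum_comm.trans (Finset.sum_congr rfl fun x _ =>
              Finset.sum_congr rfl fun k _ => by ring)
        _ = 0 := by rw [hin, zero_mul]
    rw [h0, zero_mul, smul_zero, smul_zero]
end
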